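/- arXiv:1308.1427 — 3 statements merged into one kernel-verified Lean document; each statement's English description precedes it below -/
import Mathlib

section
/- If A > |B| + |C|, then every complex solution λ of the equation λ + A + B·e^{−λ} + C·e^{−λR} = 0 (with 0 < R < 1) satisfies Re(λ) < 0. -/
open Complex

theorem norm_ofReal_mul_exp_le {a : ℝ} {w : ℂ} (hw : w.re ≤ 0) : ‖(a : ℂ) * exp w‖ ≤ |a| := by
  rw [norm_mul, norm_real, Real.norm_eq_abs, norm_exp]
  exact mul_le_of_le_one_right (abs_nonneg a) (Real.exp_le_one_iff.mpr hw)

theorem re_neg_mul_ofReal_nonpos {z : ℂ} {r : ℝ} (hz : 0 ≤ z.re) (hr : 0 ≤ r) :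
    (-z * (r : ℂ)).re ≤ 0 := by
  simpa [mul_re] using mul_nonneg hz hr

theorem mrs_stability_general (A B C R : ℝ) (hR0 : 0 < R)
    (hA : A > |B| + |C|) (z : ℂ)
    (hz : z + (A : ℂ) + (B : ℂ) * Complex.exp (-z) + (C : ℂ) * Complex.exp (-z * (R : ℂ)) = 0) :
    z.re < 0 := by
  by_contra! hre
  have hB : ‖(B : ℂ) * exp (-z)‖ ≤ |B| := norm_ofReal_mul_exp_le (by simpa using hre)
  have hC : ‖(C : ℂ) * exp (-z * R)‖ ≤ |C| :=
    norm_ofReal_mul_exp_le (re_neg_mul_ofReal_nonpos hre hR0.le)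
  have hsum : z + A = -((B : ℂ) * exp (-z) + (C : ℂ) * exp (-z * R)) := by
    linear_combination hz
  have : z.re + A ≤ |B| + |C| :=
    calc z.re + A = (z + A).re := by simp
      _ ≤ ‖z + A‖ := re_le_norm _
      _ ≤ ‖(B : ℂ) * exp (-z)‖ + ‖(C : ℂ) * exp (-z * R)‖ := by
        rw [hsum, norm_neg]; exact norm_add_le _ _
      _ ≤ |B| + |C| := add_le_add hB hC
  linarith

theorem mrs_stability (A B C R : ℝ) (hR0 : 0 < R) (hR1 : R < 1)
    (hA : A > |B| + |C|) (z : ℂ)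
    (hz : z + (A : ℂ) + (B : ℂ) * Complex.exp (-z) + (C : ℂ) * Complex.exp (-z * (R : ℂ)) = 0) :
    z.re < 0 :=
  mrs_stability_general A B C R hR0 hA z hz
end

section
/- For real ω with sin(ω(1−R)) ≠ 0, setting B(ω) = (A sin(ωR) + ω cos(ωR)) / sin(ω(1−R)) and C(ω) = −(A sin(ω) + ω cos(ω)) / sin(ω(1−R)), the complex number λ = iω satisfies λ + A + B(ω)·e^{−λ} + C(ω)·e^{−λR} = 0. -/
/-!
Equating real and imaginary parts, `z + B e^{-ia} + C e^{-ib} = 0` is a real 2 × 2 linear system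
in `B, C` with determinant `sin (a - b)`. Cramer's rule gives `B = Im (z e^{ib}) / sin (a - b)` and
`C = -Im (z e^{ia}) / sin (a - b)`; for `z = iω + A`, `a = ω`, `b = ωR` these are the stated
bifurcation curves.
-/

open Real Complex

theorem Complex.im_mul_exp_ofReal_mul_I (z : ℂ) (θ : ℝ) :
    (z * exp (θ * I)).im = z.re * Real.sin θ + z.im * Real.cos θ := by
  rw [mul_im, exp_ofReal_mul_I_re, exp_ofReal_mul_I_im]

theorem Complex.sin_sub_mul_eq_im_mul_exp_sub (z : ℂ) (a b : ℝ) :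
    (Real.sin (a - b) : ℂ) * z
      = (z * exp (a * I)).im * exp (-(b * I)) - (z * exp (b * I)).im * exp (-(a * I)) := by
  rw [← neg_mul, ← neg_mul, ← ofReal_neg, ← ofReal_neg]
  apply Complex.ext <;>
    simp only [mul_re, mul_im, exp_ofReal_mul_I_re, exp_ofReal_mul_I_im, ofReal_re, ofReal_im,
      sub_re, sub_im, Real.sin_sub, Real.cos_neg, Real.sin_neg] <;> ring

theorem Complex.add_im_div_sin_mul_exp_add_eq_zero (z : ℂ) {a b : ℝ} (h : Real.sin (a - b) ≠ 0) :
    z + ((z * exp (b * I)).im / Real.sin (a - b) : ℝ) * exp (-(a * I))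
      + (-(z * exp (a * I)).im / Real.sin (a - b) : ℝ) * exp (-(b * I)) = 0 := by
  have key := sin_sub_mul_eq_im_mul_exp_sub z a b
  -- as atoms, these are not normalized by `push_cast` / `field_simp`
  generalize (z * exp (a * I)).im = p, (z * exp (b * I)).im = q, exp (-(a * I)) = u,
    exp (-(b * I)) = v, Real.sin (a - b) = s at key h ⊢
  have h' : (s : ℂ) ≠ 0 := by exact_mod_cast h
  push_cast
  field_simp
  linear_combination key

theorem bifurcation_curve_root_general (A R ω : ℝ)
    (hs : Real.sin (ω * (1 - R)) ≠ 0) :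
    let B : ℝ := (A * Real.sin (ω * R) + ω * Real.cos (ω * R)) / Real.sin (ω * (1 - R))
    let C : ℝ := -(A * Real.sin ω + ω * Real.cos ω) / Real.sin (ω * (1 - R))
    (Complex.I * (ω : ℂ)) + (A : ℂ) + (B : ℂ) * Complex.exp (-(Complex.I * (ω : ℂ)))
      + (C : ℂ) * Complex.exp (-(Complex.I * (ω : ℂ)) * (R : ℂ)) = 0 := by
  intro B C
  rw [mul_one_sub] at hs
  have key := add_im_div_sin_mul_exp_add_eq_zero (ω * I + A) hs
  rw [im_mul_exp_ofReal_mul_I, im_mul_exp_ofReal_mul_I, ← mul_one_sub] at key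
  simp only [add_re, add_im, mul_I_re, mul_I_im, ofReal_re, ofReal_im, neg_zero, zero_add,
    add_zero] at key
  rw [mul_comm I]
  convert key using 4
  push_cast
  ring

theorem bifurcation_curve_root (A R ω : ℝ) (hR0 : 0 < R) (hR1 : R < 1)
    (hs : Real.sin (ω * (1 - R)) ≠ 0) :
    let B : ℝ := (A * Real.sin (ω * R) + ω * Real.cos (ω * R)) / Real.sin (ω * (1 - R))
    let C : ℝ := -(A * Real.sin ω + ω * Real.cos ω) / Real.sin (ω * (1 - R))
    (Complex.I * (ω : ℂ)) + (A : ℂ) + (B : ℂ) * Complex.exp (-(Complex.I * (ω : ℂ)))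
      + (C : ℂ) * Complex.exp (-(Complex.I * (ω : ℂ)) * (R : ℂ)) = 0 :=
  bifurcation_curve_root_general A R ω hs
end

section
/- Fix R ∈ (0,1), a positive integer j, and let A_j* = −(jπ/(1−R))·cot(jRπ/(1−R)) (assuming sin(jRπ/(1−R)) ≠ 0). Define B_j* = (−1)^j [(1−R)cos(jRπ/(1−R)) − jRπ·csc(jRπ/(1−R))]/(1−R)², and C_j* = [jπ·csc(jRπ/(1−R)) − (1−R)cos(jRπ/(1−R))]/(1−R)². Then for ω = jπ/(1−R), the complex number λ = iω satisfies λ + A_j* + B_j*·e^{−λ} + C_j*·e^{−λR} = 0. -/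
open Real

/-
With θ = jRπ/(1 − R) one has ω = jπ + θ and ωR = θ, so e^{−iω} = (−1)^j e^{−iθ} and
e^{−iωR} = e^{−iθ}. The equation collapses to iω + A + ((−1)^j B + C) e^{−iθ} = 0, and the
formulas for B and C are arranged so that (−1)^j B + C = ω / sin θ. Then
(ω / sin θ) e^{−iθ} = ω cot θ − iω, which cancels iω + A exactly.
-/

namespace Complex

theorem div_sin_mul_exp_neg_I_mul {ω θ : ℂ} (hθ : sin θ ≠ 0) :
    ω / sin θ * exp (-(I * θ)) = ω * (cos θ / sin θ) - I * ω := by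
  rw [show -(I * θ) = -θ * I by ring, exp_mul_I, cos_neg, sin_neg]
  field_simp
  ring

theorem exp_neg_I_mul_nat_mul_pi_add (j : ℕ) (θ : ℂ) :
    exp (-(I * (j * π + θ))) = (-1) ^ j * exp (-(I * θ)) := by
  rw [show -(I * (j * π + θ)) = j * -(π * I) + -(I * θ) by ring, exp_add, exp_nat_mul,
    exp_neg_pi_mul_I]

end Complex

theorem neg_one_pow_mul_add_eq_div_sin {R c s : ℝ} (j : ℕ) (hR : 1 - R ≠ 0) (hs : s ≠ 0) :
    (-1) ^ j * ((-1) ^ j * ((1 - R) * c - j * R * π * (1 / s)) / (1 - R) ^ 2)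
      + (j * π * (1 / s) - (1 - R) * c) / (1 - R) ^ 2 = j * π / (1 - R) / s := by
  have hsq : ((-1 : ℝ) ^ j) * (-1) ^ j = 1 := by rw [← mul_pow]; norm_num
  rw [mul_div_assoc', ← mul_assoc, hsq, one_mul]
  field_simp
  ring

theorem transition_point_root_general (R : ℝ) (j : ℕ) (hR1 : R < 1)
    (hs : Real.sin (j * R * π / (1 - R)) ≠ 0) :
    let ω : ℝ := j * π / (1 - R)
    let A : ℝ := -(j * π / (1 - R)) * (Real.cos (j * R * π / (1 - R)) / Real.sin (j * R * π / (1 - R)))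
    let B : ℝ := (-1 : ℝ) ^ j * ((1 - R) * Real.cos (j * R * π / (1 - R))
        - j * R * π * (1 / Real.sin (j * R * π / (1 - R)))) / (1 - R) ^ 2
    let C : ℝ := (j * π * (1 / Real.sin (j * R * π / (1 - R)))
        - (1 - R) * Real.cos (j * R * π / (1 - R))) / (1 - R) ^ 2
    (Complex.I * (ω : ℂ)) + (A : ℂ) + (B : ℂ) * Complex.exp (-(Complex.I * (ω : ℂ)))
      + (C : ℂ) * Complex.exp (-(Complex.I * (ω : ℂ)) * (R : ℂ)) = 0 := by
  intro ω A B C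
  set θ := j * R * π / (1 - R)
  have hR : 1 - R ≠ 0 := by linarith
  have hω : ω = j * π + θ := by simp only [ω, θ]; field_simp; ring
  have hωR : ω * R = θ := by simp only [ω, θ]; field_simp
  have hexp : Complex.exp (-(Complex.I * ω)) = (-1) ^ j * Complex.exp (-(Complex.I * θ)) := by
    rw [hω]; push_cast; exact Complex.exp_neg_I_mul_nat_mul_pi_add j θ
  have hexpR : Complex.exp (-(Complex.I * ω) * R) = Complex.exp (-(Complex.I * θ)) := by
    rw [← hωR]; push_cast; ring_nf
  have hBC : ((-1) ^ j * B + C : ℝ) = ω / sin θ :=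
    neg_one_pow_mul_add_eq_div_sin (c := cos θ) j hR hs
  have hA : A = -ω * (cos θ / sin θ) := rfl
  have hsθ : Complex.sin θ ≠ 0 := by exact_mod_cast hs
  rw [hexp, hexpR, hA]
  have hBCℂ := congrArg Complex.ofReal hBC
  push_cast at hBCℂ ⊢
  linear_combination Complex.exp (-(Complex.I * θ)) * hBCℂ
    + Complex.div_sin_mul_exp_neg_I_mul (ω := ω) hsθ

theorem transition_point_root (R : ℝ) (j : ℕ) (hj : 0 < j) (hR0 : 0 < R) (hR1 : R < 1)
    (hs : Real.sin (j * R * π / (1 - R)) ≠ 0) :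
    let ω : ℝ := j * π / (1 - R)
    let A : ℝ := -(j * π / (1 - R)) * (Real.cos (j * R * π / (1 - R)) / Real.sin (j * R * π / (1 - R)))
    let B : ℝ := (-1 : ℝ) ^ j * ((1 - R) * Real.cos (j * R * π / (1 - R))
        - j * R * π * (1 / Real.sin (j * R * π / (1 - R)))) / (1 - R) ^ 2
    let C : ℝ := (j * π * (1 / Real.sin (j * R * π / (1 - R)))
        - (1 - R) * Real.cos (j * R * π / (1 - R))) / (1 - R) ^ 2
    (Complex.I * (ω : ℂ)) + (A : ℂ) + (B : ℂ) * Complex.exp (-(Complex.I * (ω : ℂ)))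
      + (C : ℂ) * Complex.exp (-(Complex.I * (ω : ℂ)) * (R : ℂ)) = 0 :=
  transition_point_root_general R j hR1 hs
end
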